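/- Assume π1, π2, π3 > 0 and let ε > 0. If L = (L1, L2) : [0, ∞) → ℝ² is a differentiable solution of the system L1' = F1(L1,L2), L2' = F2(L1,L2) with L(t) ∈ Ω for all t ≥ 0 and |L1(0) − L2(0)| ≤ ε, then |L1(t) − L2(t)| ≤ ε for all t ≥ 0; more generally, the function t ↦ |L1(t) − L2(t)| is nonincreasing on [0, ∞). -/

import Mathlib

/-!
The difference `u = L1 - L2` solves the linear equation `u' = -π1 J u`: the terms of `F1` and
`F2` that do not involve `L_i` cancel. On `Ω` the flux `J` is positive, so `(u²)' = -2 π1 J u² ≤ 0`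
and `|u| = √(u²)` is nonincreasing.
-/

noncomputable section

/-- The flux `J(L1, L2)`. -/
def J (π2 π3 L1 L2 : ℝ) : ℝ :=
  1 / (1 + π2 * (L1 + L2) + π3 * (L1 ^ 2 + L2 ^ 2))

/-- The first component of the vector field. -/
def F1 (π0 π1 π2 π3 L1 L2 : ℝ) : ℝ :=
  J π2 π3 L1 L2 * (1 - L1 - L2) - π0 - π1 * J π2 π3 L1 L2 * L1

/-- The second component of the vector field. -/
def F2 (π0 π1 π2 π3 L1 L2 : ℝ) : ℝ :=
  J π2 π3 L1 L2 * (1 - L1 - L2) - π0 - π1 * J π2 π3 L1 L2 * L2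

/-- The domain `Ω`. -/
def Omega : Set (ℝ × ℝ) := {p | 0 ≤ p.1 ∧ 0 ≤ p.2 ∧ p.1 + p.2 ≤ 1}

theorem J_pos {π2 π3 L1 L2 : ℝ} (hπ2 : 0 ≤ π2) (hπ3 : 0 ≤ π3) (hL1 : 0 ≤ L1) (hL2 : 0 ≤ L2) :
    0 < J π2 π3 L1 L2 := by
  unfold J
  positivity

theorem F1_sub_F2 (π0 π1 π2 π3 L1 L2 : ℝ) :
    F1 π0 π1 π2 π3 L1 L2 - F2 π0 π1 π2 π3 L1 L2 = -(π1 * J π2 π3 L1 L2) * (L1 - L2) := by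
  unfold F1 F2
  ring

section LinearDecay

variable {s : Set ℝ} {u c : ℝ → ℝ}

theorem antitoneOn_sq_of_hasDerivAt_eq_mul (hs : Convex ℝ s)
    (hu : ∀ t ∈ s, HasDerivAt u (c t * u t) t) (hc : ∀ t ∈ s, c t ≤ 0) :
    AntitoneOn (u ^ 2) s := by
  have hsq : ∀ t ∈ s, HasDerivAt (u ^ 2) (2 * c t * u t ^ 2) t := fun t ht =>
    ((hu t ht).pow 2).congr_deriv (by norm_num; ring)
  refine antitoneOn_of_hasDerivWithinAt_nonpos hs
    (fun t ht => (hsq t ht).continuousAt.continuousWithinAt)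
    (fun t ht => (hsq t (interior_subset ht)).hasDerivWithinAt) fun t ht =>
    mul_nonpos_of_nonpos_of_nonneg (by linarith [hc t (interior_subset ht)]) (sq_nonneg _)

theorem antitoneOn_abs_of_hasDerivAt_eq_mul (hs : Convex ℝ s)
    (hu : ∀ t ∈ s, HasDerivAt u (c t * u t) t) (hc : ∀ t ∈ s, c t ≤ 0) :
    AntitoneOn (fun t => |u t|) s := fun _ ha _ hb hab =>
  sq_le_sq.1 (antitoneOn_sq_of_hasDerivAt_eq_mul hs hu hc ha hb hab)

end LinearDecay

theorem diff_nonincreasing_general (π0 π1 π2 π3 ε : ℝ)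
    (hπ1 : 0 < π1) (hπ2 : 0 < π2) (hπ3 : 0 < π3)
    (L1 L2 : ℝ → ℝ)
    (hd1 : ∀ t : ℝ, 0 ≤ t → HasDerivAt L1 (F1 π0 π1 π2 π3 (L1 t) (L2 t)) t)
    (hd2 : ∀ t : ℝ, 0 ≤ t → HasDerivAt L2 (F2 π0 π1 π2 π3 (L1 t) (L2 t)) t)
    (hΩ : ∀ t : ℝ, 0 ≤ t → (L1 t, L2 t) ∈ Omega)
    (hinit : |L1 0 - L2 0| ≤ ε) :
    (∀ t : ℝ, 0 ≤ t → |L1 t - L2 t| ≤ ε) ∧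
      AntitoneOn (fun t => |L1 t - L2 t|) (Set.Ici (0 : ℝ)) := by
  have hdiff : ∀ t ∈ Set.Ici (0 : ℝ), HasDerivAt (fun s => L1 s - L2 s)
      (-(π1 * J π2 π3 (L1 t) (L2 t)) * (L1 t - L2 t)) t := fun t ht =>
    ((hd1 t ht).sub (hd2 t ht)).congr_deriv (F1_sub_F2 ..)
  have hrate : ∀ t ∈ Set.Ici (0 : ℝ), -(π1 * J π2 π3 (L1 t) (L2 t)) ≤ 0 := fun t ht => by
    obtain ⟨hL1, hL2, -⟩ := hΩ t ht
    exact neg_nonpos.2 (mul_nonneg hπ1.le (J_pos hπ2.le hπ3.le hL1 hL2).le)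
  have hanti := antitoneOn_abs_of_hasDerivAt_eq_mul (convex_Ici 0) hdiff hrate
  exact ⟨fun t ht => (hanti Set.self_mem_Ici ht ht).trans hinit, hanti⟩

/-- along solutions in `Ω`, `|L1 − L2|` is nonincreasing on `[0, ∞)`;
in particular if `|L1(0) − L2(0)| ≤ ε` then `|L1(t) − L2(t)| ≤ ε` for all `t ≥ 0`. -/
theorem diff_nonincreasing (π0 π1 π2 π3 ε : ℝ)
    (hπ1 : 0 < π1) (hπ2 : 0 < π2) (hπ3 : 0 < π3) (hε : 0 < ε)
    (L1 L2 : ℝ → ℝ)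
    (hd1 : ∀ t : ℝ, 0 ≤ t → HasDerivAt L1 (F1 π0 π1 π2 π3 (L1 t) (L2 t)) t)
    (hd2 : ∀ t : ℝ, 0 ≤ t → HasDerivAt L2 (F2 π0 π1 π2 π3 (L1 t) (L2 t)) t)
    (hΩ : ∀ t : ℝ, 0 ≤ t → (L1 t, L2 t) ∈ Omega)
    (hinit : |L1 0 - L2 0| ≤ ε) :
    (∀ t : ℝ, 0 ≤ t → |L1 t - L2 t| ≤ ε) ∧
      AntitoneOn (fun t => |L1 t - L2 t|) (Set.Ici (0 : ℝ)) :=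
  diff_nonincreasing_general π0 π1 π2 π3 ε hπ1 hπ2 hπ3 L1 L2 hd1 hd2 hΩ hinit
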